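/- arXiv:1911.01748 — 5 statements merged into one kernel-verified Lean document; each statement's English description precedes it below -/
import Mathlib

section
/- Let μ be a probability measure on a measurable space E, L a closed densely defined operator on L²(μ) with domain D(L), and suppose there exist ρ > 0 and a bounded symmetric operator S on L²(μ) with ‖Sf‖₂ ≤ (1/2)‖f − μf‖₂ and ⟨f, Lf + S(Lf)⟩ ≤ −ρ‖f − μf‖₂² for all f ∈ D(L). Let (P_t)_{t≥0} be a family of bounded linear operators on L²(μ) with P₀ = Id, P_{t+s} = P_t ∘ P_s, μ(P_t f) = μ(f) for all f ∈ L²(μ), and such that for every f ∈ D(L) one has P_t f ∈ D(L) and t ↦ P_t f is differentiable in L²(μ) with derivative L(P_t f). Then for every f ∈ L²(μ) and t ≥ 0: ‖P_t f − μf‖₂ ≤ √3 · e^{−2ρt/3} · ‖f − μf‖₂. -/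
open MeasureTheory Set
open scoped RealInnerProductSpace

/-!
The functional `Φ f = ⟪f - μf, f - μf + S f⟫` satisfies `½‖f - μf‖² ≤ Φ f ≤ 3/2 ‖f - μf‖²`
by Cauchy–Schwarz and `‖S f‖ ≤ ½‖f - μf‖`. Since `S` is symmetric and kills constants,
`Φ f = ⟪f, f + S f⟫ - (μf)²`; as `P_t` preserves the mean, along `u t = P_t f` with `f ∈ D(L)`
this gives `(Φ ∘ u)' = 2⟪u, L u + S (L u)⟫ ≤ -2ρ‖u - μf‖² ≤ -(4ρ/3) Φ u`. Grönwall yields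
`Φ (P_t f) ≤ e^{-4ρt/3} Φ f`, hence `‖P_t f - μf‖² ≤ 3 e^{-4ρt/3} ‖f - μf‖²`, and density of
`D(L)` extends this (and the bound on `S`) to all of `L²(μ)`.
-/

theorem le_mul_exp_of_hasDerivWithinAt_le_mul {H : ℝ → ℝ} {K : ℝ}
    (hH : ∀ s, 0 ≤ s → ∃ d, HasDerivWithinAt H d (Ici 0) s ∧ d ≤ K * H s) {t : ℝ}
    (ht : 0 ≤ t) : H t ≤ H 0 * Real.exp (K * t) := by
  choose! H' hH' hbound using hH
  have := le_gronwallBound_of_liminf_deriv_right_le (ε := 0) (b := t)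
    (fun s hs => (hH' s hs.1).continuousWithinAt.mono Icc_subset_Ici_self)
    (fun s hs r hr => ((hH' s hs.1).mono (Ici_subset_Ici.2 hs.1)).liminf_right_slope_le hr)
    le_rfl (fun s hs => by simpa using hbound s hs.1) t ⟨ht, le_rfl⟩
  simpa [gronwallBound_ε0] using this

section InnerProductSpace

variable {F : Type*} [NormedAddCommGroup F] [InnerProductSpace ℝ F]

theorem HasDerivWithinAt.inner_add_apply_self {S : F →L[ℝ] F}
    (hS : (S : F →ₗ[ℝ] F).IsSymmetric) {u : ℝ → F} {d : F} {s : Set ℝ} {t : ℝ}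
    (hu : HasDerivWithinAt u d s t) :
    HasDerivWithinAt (fun r => ⟪u r, u r + S (u r)⟫) (2 * ⟪u t, d + S d⟫) s t := by
  refine (hu.inner ℝ (hu.add (S.hasFDerivAt.comp_hasDerivWithinAt t hu))).congr_deriv ?_
  have := hS d (u t)
  simp only [ContinuousLinearMap.coe_coe] at this
  simp only [Pi.add_apply, Function.comp_apply, inner_add_right]
  rw [← this, real_inner_comm d, real_inner_comm (S d)]
  ring

end InnerProductSpace

section L2

variable {E : Type*} [MeasurableSpace E] {μ : Measure E} [IsProbabilityMeasure μ]

theorem inner_Lp_const_left (c : ℝ) (f : Lp ℝ 2 μ) :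
    ⟪Lp.const 2 μ c, f⟫ = c * ∫ x, f x ∂μ := by
  rw [← indicatorConstLp_univ, L2.inner_indicatorConstLp_eq_inner_setIntegral, setIntegral_univ,
    real_inner_eq_re_inner]
  simp [mul_comm]

theorem continuous_Lp_const_integral :
    Continuous fun f : Lp ℝ 2 μ => Lp.const 2 μ (∫ x, f x ∂μ) := by
  have hinner : (fun f : Lp ℝ 2 μ => ∫ x, f x ∂μ) = fun f => ⟪Lp.const 2 μ 1, f⟫ :=
    funext fun f => by rw [inner_Lp_const_left, one_mul]
  exact (Lp.constL 2 μ ℝ).continuous.comp (hinner ▸ continuous_const.inner continuous_id)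

noncomputable def modifiedEnergy (S : Lp ℝ 2 μ →L[ℝ] Lp ℝ 2 μ) (f : Lp ℝ 2 μ) : ℝ :=
  ⟪f - Lp.const 2 μ (∫ x, f x ∂μ), f - Lp.const 2 μ (∫ x, f x ∂μ) + S f⟫

variable {S : Lp ℝ 2 μ →L[ℝ] Lp ℝ 2 μ}

theorem apply_Lp_const_eq_zero {C : ℝ}
    (hS : ∀ f, ‖S f‖ ≤ C * ‖f - Lp.const 2 μ (∫ x, f x ∂μ)‖) (c : ℝ) :
    S (Lp.const 2 μ c) = 0 := by
  simpa using hS (Lp.const 2 μ c)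

theorem modifiedEnergy_eq (hSsym : (S : Lp ℝ 2 μ →ₗ[ℝ] Lp ℝ 2 μ).IsSymmetric)
    (hS0 : ∀ c, S (Lp.const 2 μ c) = 0) (f : Lp ℝ 2 μ) :
    modifiedEnergy S f = ⟪f, f + S f⟫ - (∫ x, f x ∂μ) ^ 2 := by
  rw [modifiedEnergy]
  set c := ∫ x, f x ∂μ
  have hSc : ⟪Lp.const 2 μ c, S f⟫ = 0 := by
    simpa [hS0] using (hSsym (Lp.const 2 μ c) f).symm
  have hcf : ⟪Lp.const 2 μ c, f⟫ = c * c := inner_Lp_const_left c f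
  have hfc : ⟪f, Lp.const 2 μ c⟫ = c * c := by rw [real_inner_comm, hcf]
  have hcc : ⟪Lp.const 2 μ c, Lp.const 2 μ c⟫ = c * c := by
    rw [inner_Lp_const_left]; simp
  simp only [inner_sub_left, inner_sub_right, inner_add_right, hSc, hcf, hfc, hcc]
  ring

theorem abs_modifiedEnergy_sub_le {C : ℝ}
    (hS : ∀ f, ‖S f‖ ≤ C * ‖f - Lp.const 2 μ (∫ x, f x ∂μ)‖) (f : Lp ℝ 2 μ) :
    |modifiedEnergy S f - ‖f - Lp.const 2 μ (∫ x, f x ∂μ)‖ ^ 2|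
      ≤ C * ‖f - Lp.const 2 μ (∫ x, f x ∂μ)‖ ^ 2 := by
  set v := f - Lp.const 2 μ (∫ x, f x ∂μ)
  rw [modifiedEnergy, inner_add_right, real_inner_self_eq_norm_sq, add_sub_cancel_left]
  calc |⟪v, S f⟫| ≤ ‖v‖ * ‖S f‖ := abs_real_inner_le_norm _ _
    _ ≤ ‖v‖ * (C * ‖v‖) := by gcongr; exact hS f
    _ = C * ‖v‖ ^ 2 := by ring

variable {L : Lp ℝ 2 μ →ₗ.[ℝ] Lp ℝ 2 μ} {P : ℝ → Lp ℝ 2 μ →L[ℝ] Lp ℝ 2 μ} {ρ : ℝ}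

theorem exists_hasDerivWithinAt_modifiedEnergy_le (hρ : 0 ≤ ρ)
    (hSsym : (S : Lp ℝ 2 μ →ₗ[ℝ] Lp ℝ 2 μ).IsSymmetric)
    (hS : ∀ f, ‖S f‖ ≤ 1 / 2 * ‖f - Lp.const 2 μ (∫ x, f x ∂μ)‖)
    (hS2 : ∀ f : L.domain, ⟪(f : Lp ℝ 2 μ), L f + S (L f)⟫
        ≤ -ρ * ‖(f : Lp ℝ 2 μ) - Lp.const 2 μ (∫ x, (f : Lp ℝ 2 μ) x ∂μ)‖ ^ 2)
    (hPinv : ∀ t : ℝ, 0 ≤ t → ∀ f : Lp ℝ 2 μ, ∫ x, (P t f) x ∂μ = ∫ x, f x ∂μ)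
    (hPgen : ∀ f : L.domain, ∀ t : ℝ, 0 ≤ t → ∃ hm : P t (f : Lp ℝ 2 μ) ∈ L.domain,
      HasDerivWithinAt (fun s : ℝ => P s (f : Lp ℝ 2 μ))
        (L ⟨P t (f : Lp ℝ 2 μ), hm⟩) (Set.Ici 0) t)
    {g : Lp ℝ 2 μ} (hg : g ∈ L.domain) {s : ℝ} (hs : 0 ≤ s) :
    ∃ d, HasDerivWithinAt (fun r => modifiedEnergy S (P r g)) d (Ici 0) s ∧
      d ≤ -(4 * ρ / 3) * modifiedEnergy S (P s g) := by
  have hS0 := apply_Lp_const_eq_zero hS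
  obtain ⟨hm, hd⟩ := hPgen ⟨g, hg⟩ s hs
  refine ⟨_, ((hd.inner_add_apply_self hSsym).sub_const ((∫ x, g x ∂μ) ^ 2)).congr_of_mem
    (fun r hr => by rw [modifiedEnergy_eq hSsym hS0, hPinv r hr]) hs, ?_⟩
  have hdecay := hS2 ⟨P s g, hm⟩
  have hupper := (abs_le.1 (abs_modifiedEnergy_sub_le hS (P s g))).2
  dsimp only at hdecay
  nlinarith

theorem norm_sub_integral_le_of_mem_domain (hρ : 0 ≤ ρ)
    (hSsym : (S : Lp ℝ 2 μ →ₗ[ℝ] Lp ℝ 2 μ).IsSymmetric)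
    (hS : ∀ f, ‖S f‖ ≤ 1 / 2 * ‖f - Lp.const 2 μ (∫ x, f x ∂μ)‖)
    (hS2 : ∀ f : L.domain, ⟪(f : Lp ℝ 2 μ), L f + S (L f)⟫
        ≤ -ρ * ‖(f : Lp ℝ 2 μ) - Lp.const 2 μ (∫ x, (f : Lp ℝ 2 μ) x ∂μ)‖ ^ 2)
    (hP0 : P 0 = ContinuousLinearMap.id ℝ (Lp ℝ 2 μ))
    (hPinv : ∀ t : ℝ, 0 ≤ t → ∀ f : Lp ℝ 2 μ, ∫ x, (P t f) x ∂μ = ∫ x, f x ∂μ)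
    (hPgen : ∀ f : L.domain, ∀ t : ℝ, 0 ≤ t → ∃ hm : P t (f : Lp ℝ 2 μ) ∈ L.domain,
      HasDerivWithinAt (fun s : ℝ => P s (f : Lp ℝ 2 μ))
        (L ⟨P t (f : Lp ℝ 2 μ), hm⟩) (Set.Ici 0) t)
    {g : Lp ℝ 2 μ} (hg : g ∈ L.domain) {t : ℝ} (ht : 0 ≤ t) :
    ‖P t g - Lp.const 2 μ (∫ x, g x ∂μ)‖
      ≤ Real.sqrt 3 * Real.exp (-(2 * ρ * t / 3)) * ‖g - Lp.const 2 μ (∫ x, g x ∂μ)‖ := by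
  have henergy : modifiedEnergy S (P t g) ≤ modifiedEnergy S g * Real.exp (-(4 * ρ / 3) * t) := by
    simpa [hP0] using le_mul_exp_of_hasDerivWithinAt_le_mul
      (fun s hs => exists_hasDerivWithinAt_modifiedEnergy_le hρ hSsym hS hS2 hPinv hPgen hg hs) ht
  have hlower := (abs_le.1 (abs_modifiedEnergy_sub_le hS (P t g))).1
  have hupper := (abs_le.1 (abs_modifiedEnergy_sub_le hS g)).2
  rw [hPinv t ht g] at hlower
  have hexp : Real.exp (-(2 * ρ * t / 3)) ^ 2 = Real.exp (-(4 * ρ / 3) * t) := by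
    rw [← Real.exp_nat_mul]; ring_nf
  have hsq : ‖P t g - Lp.const 2 μ (∫ x, g x ∂μ)‖ ^ 2
      ≤ (Real.sqrt 3 * Real.exp (-(2 * ρ * t / 3)) * ‖g - Lp.const 2 μ (∫ x, g x ∂μ)‖) ^ 2 := by
    rw [mul_pow, mul_pow, Real.sq_sqrt zero_le_three, hexp]
    nlinarith [mul_le_mul_of_nonneg_right hupper (Real.exp_pos (-(4 * ρ / 3) * t)).le]
  exact (pow_le_pow_iff_left₀ (norm_nonneg _) (by positivity) two_ne_zero).1 hsq

end L2

theorem hypocoercive_L2_decay_general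
    {E : Type*} [MeasurableSpace E] (μ : Measure E) [IsProbabilityMeasure μ]
    (L : Lp ℝ 2 μ →ₗ.[ℝ] Lp ℝ 2 μ)
    (hdense : Dense (L.domain : Set (Lp ℝ 2 μ)))
    (ρ : ℝ) (hρ : 0 < ρ)
    (S : Lp ℝ 2 μ →L[ℝ] Lp ℝ 2 μ)
    (hSsym : ∀ f g : Lp ℝ 2 μ, ⟪S f, g⟫ = ⟪f, S g⟫)
    (hS1 : ∀ f : L.domain,
      ‖S f‖ ≤ (1 / 2) * ‖(f : Lp ℝ 2 μ) - Lp.const 2 μ (∫ x, (f : Lp ℝ 2 μ) x ∂μ)‖)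
    (hS2 : ∀ f : L.domain,
      ⟪(f : Lp ℝ 2 μ), L f + S (L f)⟫
        ≤ -ρ * ‖(f : Lp ℝ 2 μ) - Lp.const 2 μ (∫ x, (f : Lp ℝ 2 μ) x ∂μ)‖ ^ 2)
    (P : ℝ → Lp ℝ 2 μ →L[ℝ] Lp ℝ 2 μ)
    (hP0 : P 0 = ContinuousLinearMap.id ℝ (Lp ℝ 2 μ))
    (hPinv : ∀ t : ℝ, 0 ≤ t → ∀ f : Lp ℝ 2 μ, ∫ x, (P t f) x ∂μ = ∫ x, f x ∂μ)
    (hPgen : ∀ f : L.domain, ∀ t : ℝ, 0 ≤ t → ∃ hm : P t (f : Lp ℝ 2 μ) ∈ L.domain,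
      HasDerivWithinAt (fun s : ℝ => P s (f : Lp ℝ 2 μ))
        (L ⟨P t (f : Lp ℝ 2 μ), hm⟩) (Set.Ici 0) t)
    (f : Lp ℝ 2 μ) (t : ℝ) (ht : 0 ≤ t) :
    ‖P t f - Lp.const 2 μ (∫ x, f x ∂μ)‖
      ≤ Real.sqrt 3 * Real.exp (-(2 * ρ * t / 3)) * ‖f - Lp.const 2 μ (∫ x, f x ∂μ)‖ := by
  have hcenter := continuous_id.sub (continuous_Lp_const_integral (μ := μ))
  have hS : ∀ h, ‖S h‖ ≤ 1 / 2 * ‖h - Lp.const 2 μ (∫ x, h x ∂μ)‖ :=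
    hdense.induction (fun h hh => hS1 ⟨h, hh⟩)
      (isClosed_le S.continuous.norm (continuous_const.mul hcenter.norm))
  refine hdense.induction (fun g hg => ?_)
    (isClosed_le ((P t).continuous.sub continuous_Lp_const_integral).norm
      (continuous_const.mul hcenter.norm)) f
  exact norm_sub_integral_le_of_mem_domain hρ.le hSsym hS hS2 hP0 hPinv hPgen hg ht

/-- Under hypothesis (H), if `(P_t)_{t≥0}` is the Markov semigroup on
`L²(μ)` generated by `L` (with `P₀ = Id`, the semigroup property, invariance of `μ`, and
`∂_t P_t f = L P_t f` for `f ∈ D(L)`), then for every `f ∈ L²(μ)` and `t ≥ 0`,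
`‖P_t f − μf‖₂ ≤ √3 e^{−2ρt/3} ‖f − μf‖₂`. -/
theorem hypocoercive_L2_decay
    {E : Type*} [MeasurableSpace E] (μ : Measure E) [IsProbabilityMeasure μ]
    (L : Lp ℝ 2 μ →ₗ.[ℝ] Lp ℝ 2 μ)
    (hdense : Dense (L.domain : Set (Lp ℝ 2 μ)))
    (hclosed : IsClosed {p : Lp ℝ 2 μ × Lp ℝ 2 μ | ∃ hp : p.1 ∈ L.domain, L ⟨p.1, hp⟩ = p.2})
    (ρ : ℝ) (hρ : 0 < ρ)
    (S : Lp ℝ 2 μ →L[ℝ] Lp ℝ 2 μ)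
    (hSsym : ∀ f g : Lp ℝ 2 μ, ⟪S f, g⟫ = ⟪f, S g⟫)
    (hS1 : ∀ f : L.domain,
      ‖S f‖ ≤ (1 / 2) * ‖(f : Lp ℝ 2 μ) - Lp.const 2 μ (∫ x, (f : Lp ℝ 2 μ) x ∂μ)‖)
    (hS2 : ∀ f : L.domain,
      ⟪(f : Lp ℝ 2 μ), L f + S (L f)⟫
        ≤ -ρ * ‖(f : Lp ℝ 2 μ) - Lp.const 2 μ (∫ x, (f : Lp ℝ 2 μ) x ∂μ)‖ ^ 2)
    (P : ℝ → Lp ℝ 2 μ →L[ℝ] Lp ℝ 2 μ)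
    (hP0 : P 0 = ContinuousLinearMap.id ℝ (Lp ℝ 2 μ))
    (hPsemigroup : ∀ s t : ℝ, 0 ≤ s → 0 ≤ t → P (t + s) = (P t).comp (P s))
    (hPinv : ∀ t : ℝ, 0 ≤ t → ∀ f : Lp ℝ 2 μ, ∫ x, (P t f) x ∂μ = ∫ x, f x ∂μ)
    (hPgen : ∀ f : L.domain, ∀ t : ℝ, 0 ≤ t → ∃ hm : P t (f : Lp ℝ 2 μ) ∈ L.domain,
      HasDerivWithinAt (fun s : ℝ => P s (f : Lp ℝ 2 μ))
        (L ⟨P t (f : Lp ℝ 2 μ), hm⟩) (Set.Ici 0) t)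
    (f : Lp ℝ 2 μ) (t : ℝ) (ht : 0 ≤ t) :
    ‖P t f - Lp.const 2 μ (∫ x, f x ∂μ)‖
      ≤ Real.sqrt 3 * Real.exp (-(2 * ρ * t / 3)) * ‖f - Lp.const 2 μ (∫ x, f x ∂μ)‖ :=
  hypocoercive_L2_decay_general μ L hdense ρ hρ S hSsym hS1 hS2 P hP0 hPinv hPgen f t ht
end

section
/- Let μ be a probability measure, L a densely defined operator on L²(μ) with domain D(L), V ∈ L^∞(μ), and S a bounded symmetric operator on L²(μ) with ‖Sf‖₂ ≤ (1/2)‖f‖₂ for all f. Set B = Id + S, ⟨f,g⟩_B = ⟨f, Bg⟩, ‖f‖_B = √⟨f,f⟩_B, and Λ(V) = sup{ ⟨f, (L+V)f⟩_B : f ∈ D(L), ‖f‖_B = 1 }, assumed finite. Let (Q_t)_{t≥0} be a family of bounded operators on L²(μ) with Q₀ = Id, Q_{t+s} = Q_t ∘ Q_s, and such that for every f ∈ D(L), Q_t f ∈ D(L) and t ↦ Q_t f is differentiable in L²(μ) with derivative (L+V)(Q_t f). Then for every f ∈ L²(μ) and t ≥ 0: ‖Q_t f‖_B ≤ e^{t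 Λ(V)} ‖f‖_B. -/
/-!
Write `q(f) = ⟪f, f + S f⟫` for the squared `B`-norm. Since `‖S‖ ≤ 1/2`, `q(f) ≥ ‖f‖²/2`, so `q` is
positive definite, and by homogeneity the definition of `Λ` gives `⟪f, B (L + V) f⟫ ≤ Λ q(f)` on
`D(L)`. For `f ∈ D(L)` the symmetry of `B` gives `d/dt q(Q_t f) = 2 ⟪Q_t f, B (L + V) Q_t f⟫
≤ 2Λ q(Q_t f)`, hence `q(Q_t f) ≤ e^{2tΛ} q(f)` by Grönwall. Both sides of the resulting
inequality are continuous in `f`, and `D(L)` is dense.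
-/

open MeasureTheory Set Real
open scoped RealInnerProductSpace

lemma le_mul_exp_of_hasDerivWithinAt_le {φ φ' : ℝ → ℝ} {K t : ℝ}
    (hφ : ∀ s, 0 ≤ s → HasDerivWithinAt φ (φ' s) (Ici 0) s)
    (hφ' : ∀ s, 0 ≤ s → φ' s ≤ K * φ s) (ht : 0 ≤ t) :
    φ t ≤ φ 0 * exp (K * t) := by
  have hcont : ContinuousOn φ (Icc 0 t) := fun s hs ↦
    (hφ s hs.1).continuousWithinAt.mono Icc_subset_Ici_self
  have := le_gronwallBound_of_liminf_deriv_right_le hcont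
    (fun s hs r hr ↦ ((hφ s hs.1).mono (Ici_subset_Ici.mpr hs.1)).liminf_right_slope_le hr)
    le_rfl (K := K) (ε := 0) (fun s hs ↦ (add_zero (K * φ s)).symm ▸ hφ' s hs.1) t ⟨ht, le_rfl⟩
  rwa [gronwallBound_ε0, sub_zero] at this

section ModifiedNorm

variable {H : Type*} [NormedAddCommGroup H] [InnerProductSpace ℝ H] (S : H →L[ℝ] H)

lemma sq_norm_div_two_le_inner_self_add_apply (hS : ∀ f, ‖S f‖ ≤ 1 / 2 * ‖f‖) (g : H) :
    ‖g‖ ^ 2 / 2 ≤ ⟪g, g + S g⟫ := by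
  rw [inner_add_right, real_inner_self_eq_norm_sq]
  have hCS := (abs_le.mp (abs_real_inner_le_norm g (S g))).1
  nlinarith [hS g, norm_nonneg g]

lemma inner_self_add_apply_nonneg (hS : ∀ f, ‖S f‖ ≤ 1 / 2 * ‖f‖) (g : H) :
    0 ≤ ⟪g, g + S g⟫ :=
  (by positivity : (0 : ℝ) ≤ ‖g‖ ^ 2 / 2).trans (sq_norm_div_two_le_inner_self_add_apply S hS g)

lemma eq_zero_of_inner_self_add_apply_eq_zero (hS : ∀ f, ‖S f‖ ≤ 1 / 2 * ‖f‖) {g : H}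
    (hg : ⟪g, g + S g⟫ = 0) : g = 0 := by
  have := sq_norm_div_two_le_inner_self_add_apply S hS g
  rw [hg] at this
  exact norm_eq_zero.mp (by nlinarith [norm_nonneg g])

lemma inner_add_apply_le_mul_of_mem_upperBounds (hS : ∀ f, ‖S f‖ ≤ 1 / 2 * ‖f‖)
    {D : Submodule ℝ H} (A : D →ₗ[ℝ] H) {Λ : ℝ}
    (hΛ : Λ ∈ upperBounds {a : ℝ | ∃ f : D,
      √⟪(f : H), (f : H) + S (f : H)⟫ = 1 ∧ a = ⟪(f : H), A f + S (A f)⟫}) (h : D) :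
    ⟪(h : H), A h + S (A h)⟫ ≤ Λ * ⟪(h : H), (h : H) + S (h : H)⟫ := by
  rcases (inner_self_add_apply_nonneg S hS (h : H)).eq_or_lt with hq | hq
  · obtain rfl : h = 0 := by
      simpa using eq_zero_of_inner_self_add_apply_eq_zero S hS hq.symm
    simp
  set q := ⟪(h : H), (h : H) + S (h : H)⟫
  set c := (√q)⁻¹
  have hc : c ^ 2 * q = 1 := by
    rw [inv_pow, sq_sqrt hq.le, inv_mul_cancel₀ hq.ne']
  have hscaled := hΛ ⟨c • h, ?_, rfl⟩
  · simp only [map_smul, SetLike.val_smul, ← smul_add, real_inner_smul_left,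
      real_inner_smul_right] at hscaled
    have hrescale : c * (c * ⟪(h : H), A h + S (A h)⟫) * q = ⟪(h : H), A h + S (A h)⟫ := by
      linear_combination ⟪(h : H), A h + S (A h)⟫ * hc
    nlinarith [mul_le_mul_of_nonneg_right hscaled hq.le]
  · simp only [SetLike.val_smul, map_smul, ← smul_add, real_inner_smul_left,
      real_inner_smul_right, ← mul_assoc, ← sq]
    rw [hc, sqrt_one]

lemma HasDerivWithinAt.inner_self_add_apply (hSsym : ∀ f g, ⟪S f, g⟫ = ⟪f, S g⟫)
    {u : ℝ → H} {v : H} {s : Set ℝ} {x : ℝ} (hu : HasDerivWithinAt u v s x) :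
    HasDerivWithinAt (fun y ↦ ⟪u y, u y + S (u y)⟫) (2 * ⟪u x, v + S v⟫) s x := by
  refine (hu.inner ℝ (hu.add (S.hasFDerivAt.comp_hasDerivWithinAt x hu))).congr_deriv ?_
  simp only [Pi.add_apply, Function.comp_apply, inner_add_right]
  rw [real_inner_comm (u x) v, real_inner_comm (S (u x)) v, hSsym]
  ring

lemma sqrt_inner_self_add_apply_le_exp_mul (hSsym : ∀ f g, ⟪S f, g⟫ = ⟪f, S g⟫)
    {u : ℝ → H} {Λ t : ℝ}
    (hu : ∀ s, 0 ≤ s → ∃ v, HasDerivWithinAt u v (Ici 0) s ∧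
      ⟪u s, v + S v⟫ ≤ Λ * ⟪u s, u s + S (u s)⟫) (ht : 0 ≤ t) :
    √⟪u t, u t + S (u t)⟫ ≤ exp (t * Λ) * √⟪u 0, u 0 + S (u 0)⟫ := by
  choose! v hv hvΛ using hu
  have hgrowth := le_mul_exp_of_hasDerivWithinAt_le (K := 2 * Λ)
    (fun s hs ↦ (hv s hs).inner_self_add_apply S hSsym) (fun s hs ↦ by linarith [hvΛ s hs]) ht
  calc √⟪u t, u t + S (u t)⟫
      ≤ √(⟪u 0, u 0 + S (u 0)⟫ * (exp (t * Λ) * exp (t * Λ))) := by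
        rw [← exp_add]; exact sqrt_le_sqrt (by convert hgrowth using 3; ring)
    _ = exp (t * Λ) * √⟪u 0, u 0 + S (u 0)⟫ := by
        rw [sqrt_mul' _ (by positivity), sqrt_mul_self (exp_pos _).le, mul_comm]

end ModifiedNorm

theorem feynman_kac_modified_norm_growth_general
    {E : Type*} [MeasurableSpace E] (μ : Measure E)
    (L : Lp ℝ 2 μ →ₗ.[ℝ] Lp ℝ 2 μ)
    (hdense : Dense (L.domain : Set (Lp ℝ 2 μ)))
    (M : Lp ℝ 2 μ →L[ℝ] Lp ℝ 2 μ)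
    (S : Lp ℝ 2 μ →L[ℝ] Lp ℝ 2 μ)
    (hSsym : ∀ f g : Lp ℝ 2 μ, ⟪S f, g⟫ = ⟪f, S g⟫)
    (hSbound : ∀ f : Lp ℝ 2 μ, ‖S f‖ ≤ (1 / 2) * ‖f‖)
    (Λ : ℝ)
    (hΛ : IsLUB {a : ℝ | ∃ f : L.domain,
      Real.sqrt ⟪(f : Lp ℝ 2 μ), (f : Lp ℝ 2 μ) + S (f : Lp ℝ 2 μ)⟫ = 1 ∧
      a = ⟪(f : Lp ℝ 2 μ), (L f + M (f : Lp ℝ 2 μ)) + S (L f + M (f : Lp ℝ 2 μ))⟫} Λ)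
    (Q : ℝ → Lp ℝ 2 μ →L[ℝ] Lp ℝ 2 μ)
    (hQ0 : Q 0 = ContinuousLinearMap.id ℝ (Lp ℝ 2 μ))
    (hQgen : ∀ f : L.domain, ∀ t : ℝ, 0 ≤ t → ∃ hm : Q t (f : Lp ℝ 2 μ) ∈ L.domain,
      HasDerivWithinAt (fun s : ℝ => Q s (f : Lp ℝ 2 μ))
        (L ⟨Q t (f : Lp ℝ 2 μ), hm⟩ + M (Q t (f : Lp ℝ 2 μ))) (Set.Ici 0) t)
    (f : Lp ℝ 2 μ) (t : ℝ) (ht : 0 ≤ t) :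
    Real.sqrt ⟪Q t f, Q t f + S (Q t f)⟫
      ≤ Real.exp (t * Λ) * Real.sqrt ⟪f, f + S f⟫ := by
  have hΛbound := inner_add_apply_le_mul_of_mem_upperBounds S hSbound
    (L.toFun + M.toLinearMap ∘ₗ L.domain.subtype) hΛ.1
  refine hdense.induction (fun g hg ↦ ?_) (isClosed_le (by fun_prop) (by fun_prop)) f
  simpa [hQ0] using sqrt_inner_self_add_apply_le_exp_mul S hSsym (u := fun s ↦ Q s g)
    (fun s hs ↦ let ⟨hm, hderiv⟩ := hQgen ⟨g, hg⟩ s hs; ⟨_, hderiv, hΛbound ⟨_, hm⟩⟩) ht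

/-- If `S` is bounded symmetric with `‖Sf‖₂ ≤ ½‖f‖₂`, `B = Id + S`,
`V ∈ L^∞(μ)` acts by multiplication (operator `M`), `Λ(V) = sup{⟨f,(L+V)f⟩_B : f ∈ D(L),
‖f‖_B = 1}` is finite, and `(Q_t)` is the semigroup generated by `L + V`, then
`‖Q_t f‖_B ≤ e^{tΛ(V)} ‖f‖_B` for all `f ∈ L²(μ)` and `t ≥ 0`. -/
theorem feynman_kac_modified_norm_growth
    {E : Type*} [MeasurableSpace E] (μ : Measure E) [IsProbabilityMeasure μ]
    (L : Lp ℝ 2 μ →ₗ.[ℝ] Lp ℝ 2 μ)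
    (hdense : Dense (L.domain : Set (Lp ℝ 2 μ)))
    (V : E → ℝ) (hV : MemLp V ⊤ μ)
    (M : Lp ℝ 2 μ →L[ℝ] Lp ℝ 2 μ)
    (hM : ∀ f : Lp ℝ 2 μ, M f =ᵐ[μ] fun x => V x * f x)
    (S : Lp ℝ 2 μ →L[ℝ] Lp ℝ 2 μ)
    (hSsym : ∀ f g : Lp ℝ 2 μ, ⟪S f, g⟫ = ⟪f, S g⟫)
    (hSbound : ∀ f : Lp ℝ 2 μ, ‖S f‖ ≤ (1 / 2) * ‖f‖)
    (Λ : ℝ)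
    (hΛ : IsLUB {a : ℝ | ∃ f : L.domain,
      Real.sqrt ⟪(f : Lp ℝ 2 μ), (f : Lp ℝ 2 μ) + S (f : Lp ℝ 2 μ)⟫ = 1 ∧
      a = ⟪(f : Lp ℝ 2 μ), (L f + M (f : Lp ℝ 2 μ)) + S (L f + M (f : Lp ℝ 2 μ))⟫} Λ)
    (Q : ℝ → Lp ℝ 2 μ →L[ℝ] Lp ℝ 2 μ)
    (hQ0 : Q 0 = ContinuousLinearMap.id ℝ (Lp ℝ 2 μ))
    (hQsemigroup : ∀ s t : ℝ, 0 ≤ s → 0 ≤ t → Q (t + s) = (Q t).comp (Q s))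
    (hQgen : ∀ f : L.domain, ∀ t : ℝ, 0 ≤ t → ∃ hm : Q t (f : Lp ℝ 2 μ) ∈ L.domain,
      HasDerivWithinAt (fun s : ℝ => Q s (f : Lp ℝ 2 μ))
        (L ⟨Q t (f : Lp ℝ 2 μ), hm⟩ + M (Q t (f : Lp ℝ 2 μ))) (Set.Ici 0) t)
    (f : Lp ℝ 2 μ) (t : ℝ) (ht : 0 ≤ t) :
    Real.sqrt ⟪Q t f, Q t f + S (Q t f)⟫
      ≤ Real.exp (t * Λ) * Real.sqrt ⟪f, f + S f⟫ :=
  feynman_kac_modified_norm_growth_general μ L hdense M S hSsym hSbound Λ hΛ Q hQ0 hQgen f t ht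
end

section
/- Let μ be a probability measure and S a bounded symmetric linear operator on L²(μ) such that ‖Sh‖₂ ≤ (1/2)‖h − μh‖₂ for all h ∈ L²(μ) (in particular S annihilates constant functions). Let V ∈ L^∞(μ) with μV = 0, and let f ∈ L²(μ) with ‖f‖₂ = 1 and μf ≠ 0; set γ = √(1/(μf)² − 1). Then ⟨f, (Id+S)(Vf)⟩ ≤ (3γ²/(2(1+γ²)))·‖V‖_∞ + (5γ/(2(1+γ²)))·‖V‖₂. -/
/-!
Write `f = m + g` with `m = μf` and `g = f - m` orthogonal to the constants, so that
`‖g‖² = 1 - m² = m²γ²`. Since `μV = 0`, `⟨f, Vf⟩ = 2⟨mV, g⟩ + ⟨g, Vg⟩ ≤ 2|m|‖V‖₂‖g‖ + ‖V‖_∞‖g‖²`.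
Symmetry of `S` and `S1 = 0` give `⟨f, S(Vf)⟩ = ⟨g, S(Vf)⟩`, and centering is a contraction, so
`‖S(Vf)‖ ≤ ½‖Vf‖ ≤ ½(|m|‖V‖₂ + ‖V‖_∞‖g‖)`. Both bounds are quadratic in `(|m|, ‖g‖)`, and
`m² = 1/(1 + γ²)`.
-/

open MeasureTheory
open scoped RealInnerProductSpace ENNReal

section InnerProductSpace

variable {H : Type*} [NormedAddCommGroup H] [InnerProductSpace ℝ H]

lemma LinearMap.IsSymmetric.inner_add_apply_add_le {T : H →ₗ[ℝ] H} (hT : T.IsSymmetric)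
    {c g : H} {K : ℝ} (hc : ⟪c, T c⟫ = 0) (hg : ‖T g‖ ≤ K * ‖g‖) :
    ⟪c + g, T (c + g)⟫ ≤ 2 * (‖T c‖ * ‖g‖) + K * ‖g‖ ^ 2 := by
  have hcg : ⟪c, T g⟫ ≤ ‖T c‖ * ‖g‖ := (hT c g).symm ▸ real_inner_le_norm _ _
  have hgc : ⟪g, T c⟫ ≤ ‖T c‖ * ‖g‖ := (real_inner_le_norm _ _).trans_eq (mul_comm _ _)
  have hgg : ⟪g, T g⟫ ≤ K * ‖g‖ ^ 2 := calc
    ⟪g, T g⟫ ≤ ‖g‖ * ‖T g‖ := real_inner_le_norm _ _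
    _ ≤ ‖g‖ * (K * ‖g‖) := by gcongr
    _ = K * ‖g‖ ^ 2 := by ring
  simp only [map_add, inner_add_left, inner_add_right, hc]
  linarith

lemma LinearMap.IsSymmetric.inner_add_apply_le_of_apply_eq_zero {S : H →ₗ[ℝ] H}
    (hS : S.IsSymmetric) {c : H} (hc : S c = 0) (g w : H) :
    ⟪c + g, S w⟫ ≤ ‖g‖ * ‖S w‖ := by
  rw [inner_add_left, ← hS, hc, inner_zero_left, zero_add]
  exact real_inner_le_norm _ _

lemma LinearMap.IsSymmetric.inner_add_apply_add_add_apply_le {T S : H →ₗ[ℝ] H}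
    (hT : T.IsSymmetric) (hS : S.IsSymmetric) {c g : H} {K : ℝ} (hTc : ⟪c, T c⟫ = 0)
    (hTg : ‖T g‖ ≤ K * ‖g‖) (hSc : S c = 0) (hS_half : ∀ w, ‖S w‖ ≤ 1 / 2 * ‖w‖) :
    ⟪c + g, T (c + g) + S (T (c + g))⟫ ≤ 5 / 2 * (‖T c‖ * ‖g‖) + 3 / 2 * (K * ‖g‖ ^ 2) := by
  have hT_add : ‖T (c + g)‖ ≤ ‖T c‖ + K * ‖g‖ := by
    rw [map_add]; exact (norm_add_le _ _).trans (by gcongr)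
  have hS_term : ⟪c + g, S (T (c + g))⟫ ≤ 1 / 2 * (‖T c‖ * ‖g‖) + 1 / 2 * (K * ‖g‖ ^ 2) := calc
    _ ≤ ‖g‖ * ‖S (T (c + g))‖ := hS.inner_add_apply_le_of_apply_eq_zero hSc g _
    _ ≤ ‖g‖ * (1 / 2 * (‖T c‖ + K * ‖g‖)) := by gcongr; exact (hS_half _).trans (by gcongr)
    _ = _ := by ring
  rw [inner_add_right]
  linarith [hT.inner_add_apply_add_le hTc hTg]

end InnerProductSpace

namespace MeasureTheory.L2

variable {E : Type*} [MeasurableSpace E] {μ : Measure E}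

lemma inner_const_left [IsFiniteMeasure μ] (c : ℝ) (h : Lp ℝ 2 μ) :
    ⟪Lp.const 2 μ c, h⟫ = c * ∫ x, h x ∂μ := by
  rw [← indicatorConstLp_univ, inner_indicatorConstLp_eq_setIntegral_inner, setIntegral_univ,
    ← integral_const_mul]
  simp [mul_comm]

lemma norm_const [IsProbabilityMeasure μ] (c : ℝ) : ‖Lp.const 2 μ c‖ = |c| := by
  simp [Lp.norm_const]

lemma norm_sub_const_integral_sq [IsProbabilityMeasure μ] (h : Lp ℝ 2 μ) :
    ‖h - Lp.const 2 μ (∫ x, h x ∂μ)‖ ^ 2 = ‖h‖ ^ 2 - (∫ x, h x ∂μ) ^ 2 := by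
  rw [norm_sub_sq_real, norm_const, sq_abs, real_inner_comm, inner_const_left]
  ring

lemma norm_sub_const_integral_le [IsProbabilityMeasure μ] (h : Lp ℝ 2 μ) :
    ‖h - Lp.const 2 μ (∫ x, h x ∂μ)‖ ≤ ‖h‖ :=
  pow_le_pow_iff_left₀ (norm_nonneg _) (norm_nonneg _) two_ne_zero |>.mp <| by
    rw [norm_sub_const_integral_sq]; nlinarith

lemma isSymmetric_of_ae_eq_mul {V : E → ℝ} {M : Lp ℝ 2 μ →L[ℝ] Lp ℝ 2 μ}
    (hM : ∀ f, M f =ᵐ[μ] fun x => V x * f x) : (M : Lp ℝ 2 μ →ₗ[ℝ] Lp ℝ 2 μ).IsSymmetric := by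
  intro a b
  simp only [ContinuousLinearMap.coe_coe, inner_def]
  refine integral_congr_ae ?_
  filter_upwards [hM a, hM b] with x ha hb
  simp only [ha, hb, RCLike.inner_apply, conj_trivial]
  ring

lemma norm_le_of_ae_eq_mul {V : E → ℝ} (hV : MemLp V ⊤ μ) {g w : Lp ℝ 2 μ}
    (hw : w =ᵐ[μ] fun x => V x * g x) : ‖w‖ ≤ (eLpNorm V ⊤ μ).toReal * ‖g‖ := by
  rw [Lp.norm_def, Lp.norm_def, ← ENNReal.toReal_mul, eLpNorm_congr_ae hw]
  exact ENNReal.toReal_mono (ENNReal.mul_ne_top hV.2.ne (Lp.eLpNorm_ne_top g))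
    (eLpNorm_smul_le_eLpNorm_top_mul_eLpNorm 2 (Lp.aestronglyMeasurable g) V)

lemma norm_of_ae_eq_mul_const {V : E → ℝ} {w : Lp ℝ 2 μ} {c : ℝ}
    (hw : w =ᵐ[μ] fun x => V x * c) : ‖w‖ = |c| * (eLpNorm V 2 μ).toReal := by
  have : (fun x => V x * c) = c • V := by ext x; simp [mul_comm]
  rw [Lp.norm_def, eLpNorm_congr_ae hw, this, eLpNorm_const_smul, ENNReal.toReal_mul]
  simp

end MeasureTheory.L2

lemma Real.sqrt_one_sub_sq_eq_abs_mul {m : ℝ} (hm : m ≠ 0) :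
    √(1 - m ^ 2) = |m| * √(1 / m ^ 2 - 1) := by
  rw [← Real.sqrt_sq_eq_abs, ← Real.sqrt_mul (sq_nonneg m), mul_sub,
    mul_one_div_cancel (by positivity), mul_one]

lemma sq_eq_one_div_one_add_sq_sqrt {m : ℝ} (hm : m ≠ 0) (hm1 : m ^ 2 ≤ 1) :
    m ^ 2 = 1 / (1 + √(1 / m ^ 2 - 1) ^ 2) := by
  have : 0 ≤ 1 / m ^ 2 - 1 := by rw [sub_nonneg, le_div_iff₀ (by positivity)]; linarith
  rw [Real.sq_sqrt this]
  field_simp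
  ring

/-- Let `S` be bounded symmetric on `L²(μ)` with
`‖Sh‖₂ ≤ ½‖h − μh‖₂` for all `h`, let `V ∈ L^∞(μ)` with `μV = 0` act by multiplication
(operator `M`), and let `f ∈ L²(μ)` with `‖f‖₂ = 1`, `μf ≠ 0`, `γ = √(1/(μf)² − 1)`.
Then `⟨f, (Id+S)(Vf)⟩ ≤ (3γ²/(2(1+γ²)))‖V‖_∞ + (5γ/(2(1+γ²)))‖V‖₂`. -/
theorem modified_inner_product_multiplication_bound
    {E : Type*} [MeasurableSpace E] (μ : Measure E) [IsProbabilityMeasure μ]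
    (S : Lp ℝ 2 μ →L[ℝ] Lp ℝ 2 μ)
    (hSsym : ∀ f g : Lp ℝ 2 μ, ⟪S f, g⟫ = ⟪f, S g⟫)
    (hSbound : ∀ h : Lp ℝ 2 μ, ‖S h‖ ≤ (1 / 2) * ‖h - Lp.const 2 μ (∫ x, h x ∂μ)‖)
    (V : E → ℝ) (hV : MemLp V ⊤ μ) (hVmean : ∫ x, V x ∂μ = 0)
    (M : Lp ℝ 2 μ →L[ℝ] Lp ℝ 2 μ)
    (hM : ∀ f : Lp ℝ 2 μ, M f =ᵐ[μ] fun x => V x * f x)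
    (f : Lp ℝ 2 μ) (hfnorm : ‖f‖ = 1) (hfmean : ∫ x, f x ∂μ ≠ 0)
    (γ : ℝ) (hγ : γ = Real.sqrt (1 / (∫ x, f x ∂μ) ^ 2 - 1)) :
    ⟪f, M f + S (M f)⟫
      ≤ (3 * γ ^ 2 / (2 * (1 + γ ^ 2))) * (eLpNorm V ⊤ μ).toReal
        + (5 * γ / (2 * (1 + γ ^ 2))) * (eLpNorm V 2 μ).toReal := by
  set m := ∫ x, f x ∂μ
  set c : Lp ℝ 2 μ := Lp.const 2 μ m
  have hMc : M c =ᵐ[μ] fun x => V x * m := by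
    filter_upwards [hM c, Lp.coeFn_const 2 μ m] with x hx hcx
    rw [hx, hcx]; rfl
  have hcMc : ⟪c, M c⟫ = 0 := by
    rw [L2.inner_const_left, integral_congr_ae hMc, integral_mul_const, hVmean, zero_mul,
      mul_zero]
  have hSc : S c = 0 := norm_le_zero_iff.mp <| by simpa [c] using hSbound c
  have hS_half (h : Lp ℝ 2 μ) : ‖S h‖ ≤ 1 / 2 * ‖h‖ :=
    (hSbound h).trans (by gcongr; exact L2.norm_sub_const_integral_le h)
  have key := (L2.isSymmetric_of_ae_eq_mul hM).inner_add_apply_add_add_apply_le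
    (S := (S : Lp ℝ 2 μ →ₗ[ℝ] Lp ℝ 2 μ)) hSsym hcMc (L2.norm_le_of_ae_eq_mul hV (hM (f - c)))
    hSc hS_half
  have hg_sq : ‖f - c‖ ^ 2 = 1 - m ^ 2 := by
    rw [L2.norm_sub_const_integral_sq, hfnorm, one_pow]
  have hg : ‖f - c‖ = |m| * γ := by
    rw [hγ, ← Real.sqrt_one_sub_sq_eq_abs_mul hfmean, ← hg_sq, Real.sqrt_sq (norm_nonneg _)]
  simp only [add_sub_cancel, ContinuousLinearMap.coe_coe] at key
  rw [L2.norm_of_ae_eq_mul_const hMc, hg] at key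
  refine key.trans_eq ?_
  have hm : |m| * |m| = 1 / (1 + γ ^ 2) := by
    rw [abs_mul_abs_self, ← sq, hγ]
    exact sq_eq_one_div_one_add_sq_sqrt hfmean (by linarith [sq_nonneg ‖f - c‖])
  calc _ = |m| * |m| * (5 / 2 * γ * (eLpNorm V 2 μ).toReal
          + 3 / 2 * γ ^ 2 * (eLpNorm V ⊤ μ).toReal) := by ring
    _ = _ := by rw [hm]; field_simp; ring
end

section
/- For all real numbers λ₀ > 0, β > 0 and r ≥ 0, one has sup_{λ ∈ [0, λ₀)} ( λ r − β λ² / (λ₀ − λ) ) = λ₀ r² / ( β (1 + √(1 + r/β))² ), and moreover λ₀ r² / ( β (1 + √(1 + r/β))² ) ≥ λ₀ r² / ( 4(β + r) ). -/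
/-!
Substituting `s = √(1 + r/β)`, i.e. `r = β (s² - 1)` with `s ≥ 1`, both sides become polynomial
in `s`: the claimed supremum is `λ₀ β (s - 1)²`. For `λ < λ₀` the identity
`β λ² - (λ r - λ₀ β (s - 1)²)(λ₀ - λ) = β (s (λ₀ - λ) - λ₀)²` shows that this is an upper bound,
attained where the square vanishes, at `λ = λ₀ (s - 1)/s`. The lower bound is `(1 + s)² ≤ (2s)²`.
-/

namespace LegendreSup

variable {lam0 β s : ℝ}

lemma objective_le (hβ : 0 ≤ β) {l : ℝ} (hl : l < lam0) :
    l * (β * (s ^ 2 - 1)) - β * l ^ 2 / (lam0 - l) ≤ lam0 * β * (s - 1) ^ 2 := by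
  have hgap : 0 < lam0 - l := sub_pos.mpr hl
  have key : β * l ^ 2 - (l * (β * (s ^ 2 - 1)) - lam0 * β * (s - 1) ^ 2) * (lam0 - l)
      = β * (s * (lam0 - l) - lam0) ^ 2 := by ring
  rw [sub_le_comm, le_div_iff₀ hgap, ← sub_nonneg, key]
  positivity

lemma objective_at_optimum (hlam0 : lam0 ≠ 0) (hs : s ≠ 0) :
    let l := lam0 * (s - 1) / s
    l * (β * (s ^ 2 - 1)) - β * l ^ 2 / (lam0 - l) = lam0 * β * (s - 1) ^ 2 := by
  have hgap : lam0 - lam0 * (s - 1) / s = lam0 / s := by field_simp; ring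
  simp only [hgap]
  field_simp
  ring

lemma isGreatest_objective (hlam0 : 0 < lam0) (hβ : 0 ≤ β) (hs : 1 ≤ s) :
    IsGreatest ((fun l : ℝ => l * (β * (s ^ 2 - 1)) - β * l ^ 2 / (lam0 - l)) '' Set.Ico 0 lam0)
      (lam0 * β * (s - 1) ^ 2) := by
  have hs0 : 0 < s := by linarith
  refine ⟨⟨lam0 * (s - 1) / s, ⟨?_, ?_⟩, objective_at_optimum hlam0.ne' hs0.ne'⟩, ?_⟩
  · have : 0 ≤ s - 1 := by linarith
    positivity
  · rw [div_lt_iff₀ hs0]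
    nlinarith
  · rintro _ ⟨l, ⟨-, hl⟩, rfl⟩
    exact objective_le hβ hl

lemma closed_form_eq (hβ : β ≠ 0) (hs : 1 + s ≠ 0) :
    lam0 * (β * (s ^ 2 - 1)) ^ 2 / (β * (1 + s) ^ 2) = lam0 * β * (s - 1) ^ 2 := by
  field_simp
  ring

lemma mul_one_add_sq_le (hβ : 0 ≤ β) (hs : 1 ≤ s) :
    β * (1 + s) ^ 2 ≤ 4 * (β + β * (s ^ 2 - 1)) := by
  calc β * (1 + s) ^ 2 ≤ β * (2 * s) ^ 2 := by gcongr; linarith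
    _ = 4 * (β + β * (s ^ 2 - 1)) := by ring

end LegendreSup

open LegendreSup in
/-- For `λ₀, β > 0` and `r ≥ 0`,
`sup_{λ ∈ [0, λ₀)} (λ r − β λ²/(λ₀ − λ)) = λ₀ r² / (β (1 + √(1 + r/β))²)`, and this
quantity is at least `λ₀ r² / (4(β + r))`. -/
theorem sup_legendre_transform (lam0 β r : ℝ) (hlam0 : 0 < lam0) (hβ : 0 < β) (hr : 0 ≤ r) :
    sSup ((fun l : ℝ => l * r - β * l ^ 2 / (lam0 - l)) '' Set.Ico 0 lam0)
        = lam0 * r ^ 2 / (β * (1 + Real.sqrt (1 + r / β)) ^ 2) ∧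
      lam0 * r ^ 2 / (4 * (β + r))
        ≤ lam0 * r ^ 2 / (β * (1 + Real.sqrt (1 + r / β)) ^ 2) := by
  generalize hs : Real.sqrt (1 + r / β) = s
  have hs1 : 1 ≤ s := by
    rw [← hs, Real.one_le_sqrt, le_add_iff_nonneg_right]
    positivity
  obtain rfl : r = β * (s ^ 2 - 1) := by
    rw [← hs, Real.sq_sqrt (by positivity)]
    field_simp
    ring
  refine ⟨?_, ?_⟩
  · rw [closed_form_eq hβ.ne' (by linarith)]
    exact (isGreatest_objective hlam0 hβ.le hs1).csSup_eq
  · exact div_le_div_of_nonneg_left (by positivity) (by positivity) (mul_one_add_sq_le hβ.le hs1)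
end

section
/- Let μ be the probability measure on ℝ with density proportional to exp(−x²/√(1+x²)) with respect to the Lebesgue measure. Then μ satisfies a Poincaré inequality: there exists a constant C_P > 0 such that for every smooth compactly supported function f : ℝ → ℝ, ∫ f² dμ − (∫ f dμ)² ≤ C_P ∫ (f′)² dμ. -/
open MeasureTheory

/-- The probability measure on `ℝ` with density proportional to `exp(−x²/√(1+x²))`
with respect to the Lebesgue measure. -/
noncomputable def muV : Measure ℝ :=
  (volume : Measure ℝ).withDensity fun x =>
    ENNReal.ofReal
      ((∫ y : ℝ, Real.exp (-(y ^ 2 / Real.sqrt (1 + y ^ 2))))⁻¹ *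
        Real.exp (-(x ^ 2 / Real.sqrt (1 + x ^ 2))))

namespace PoincareMuVAux

open Real Set Filter
open scoped ENNReal NNReal

noncomputable def V (x : ℝ) : ℝ := x ^ 2 / Real.sqrt (1 + x ^ 2)

lemma sqrtpos (x : ℝ) : 0 < Real.sqrt (1 + x ^ 2) :=
  Real.sqrt_pos.2 (by positivity)

lemma abs_le_sqrt' (x : ℝ) : |x| ≤ Real.sqrt (1 + x ^ 2) := by
  rw [← Real.sqrt_sq_eq_abs]
  exact Real.sqrt_le_sqrt (by nlinarith)

lemma sqrt_le' (x : ℝ) : Real.sqrt (1 + x ^ 2) ≤ 1 + |x| := by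
  rw [show (1 : ℝ) + |x| = Real.sqrt ((1 + |x|) ^ 2) from
    (Real.sqrt_sq (by positivity)).symm]
  exact Real.sqrt_le_sqrt (by nlinarith [abs_nonneg x, sq_abs x])

lemma V_le_abs (x : ℝ) : V x ≤ |x| := by
  rw [V, div_le_iff₀ (sqrtpos x)]
  calc x ^ 2 = |x| * |x| := by rw [← sq_abs]; ring
    _ ≤ |x| * Real.sqrt (1 + x ^ 2) :=
      mul_le_mul_of_nonneg_left (abs_le_sqrt' x) (abs_nonneg x)

lemma abs_sub_one_le_V (x : ℝ) : |x| - 1 ≤ V x := by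
  have h1 : x ^ 2 / (1 + |x|) ≤ x ^ 2 / Real.sqrt (1 + x ^ 2) :=
    div_le_div_of_nonneg_left (by positivity) (sqrtpos x) (sqrt_le' x)
  have h2 : |x| - 1 ≤ x ^ 2 / (1 + |x|) := by
    rw [le_div_iff₀ (by positivity : (0:ℝ) < 1 + |x|)]
    nlinarith [sq_abs x, abs_nonneg x]
  calc |x| - 1 ≤ x ^ 2 / (1 + |x|) := h2
    _ ≤ V x := h1

lemma exp_negV_le (x : ℝ) : Real.exp (-V x) ≤ Real.exp 1 * Real.exp (-|x|) := by
  rw [← Real.exp_add]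
  exact Real.exp_le_exp.2 (by linarith [abs_sub_one_le_V x])

lemma exp_neg_abs_le (x : ℝ) : Real.exp (-|x|) ≤ Real.exp (-V x) :=
  Real.exp_le_exp.2 (by linarith [V_le_abs x])

lemma contV : Continuous V := by
  apply (continuous_pow 2).div
  · exact Real.continuous_sqrt.comp (continuous_const.add (continuous_pow 2))
  · exact fun x => (sqrtpos x).ne'

lemma integrable_exp_neg_abs : Integrable (fun x : ℝ => Real.exp (-|x|)) := by
  rw [← integrableOn_univ, ← Set.Iic_union_Ioi (a := (0 : ℝ))]
  apply IntegrableOn.union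
  · exact (integrableOn_exp_Iic 0).congr_fun
      (fun x hx => by rw [abs_of_nonpos (mem_Iic.1 hx), neg_neg]) measurableSet_Iic
  · exact (exp_neg_integrableOn_Ioi 0 one_pos).congr_fun
      (fun x hx => by rw [abs_of_pos (mem_Ioi.1 hx)]; ring_nf) measurableSet_Ioi

lemma integrable_exp_negV : Integrable (fun x : ℝ => Real.exp (-V x)) := by
  apply Integrable.mono' (integrable_exp_neg_abs.const_mul (Real.exp 1))
    (contV.neg.rexp.aestronglyMeasurable)
  filter_upwards with x
  rw [Real.norm_eq_abs, abs_of_pos (Real.exp_pos _)]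
  exact exp_negV_le x

noncomputable def Z : ℝ := ∫ x, Real.exp (-V x)

lemma Zpos : 0 < Z := by
  rw [Z]
  rw [integral_pos_iff_support_of_nonneg (fun x => (Real.exp_pos _).le) integrable_exp_negV]
  have : Function.support (fun x : ℝ => Real.exp (-V x)) = Set.univ :=
    Set.eq_univ_of_forall fun x => (Real.exp_pos _).ne'
  rw [this]
  simp

noncomputable def ρ (x : ℝ) : ℝ := Z⁻¹ * Real.exp (-V x)

lemma ρ_nonneg (x : ℝ) : 0 ≤ ρ x :=
  mul_nonneg (inv_nonneg.2 Zpos.le) (Real.exp_pos _).le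

lemma contρ : Continuous ρ := continuous_const.mul contV.neg.rexp

lemma integrable_ρ : Integrable ρ := integrable_exp_negV.const_mul _

lemma integral_ρ : ∫ x, ρ x = 1 := by
  simp only [ρ]
  rw [integral_const_mul, ← Z, inv_mul_cancel₀ Zpos.ne']

lemma muV_eq : muV = (volume : Measure ℝ).withDensity fun x => ENNReal.ofReal (ρ x) := rfl

lemma integral_muV (g : ℝ → ℝ) : ∫ x, g x ∂muV = ∫ x, ρ x * g x := by
  rw [muV_eq]
  have m : Measurable fun x => (ρ x).toNNReal :=
    measurable_real_toNNReal.comp contρ.measurable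
  have h : (fun x => ENNReal.ofReal (ρ x)) = fun x => ((ρ x).toNNReal : ℝ≥0∞) := rfl
  rw [h, integral_withDensity_eq_integral_smul m g]
  congr 1
  funext x
  rw [NNReal.smul_def, Real.coe_toNNReal _ (ρ_nonneg x), smul_eq_mul]

lemma integrable_ρ_mul {h : ℝ → ℝ} (hm : AEStronglyMeasurable h volume) {M : ℝ}
    (hb : ∀ x, |h x| ≤ M) : Integrable (fun x => ρ x * h x) := by
  have := integrable_ρ.bdd_mul (c := M) hm (Filter.Eventually.of_forall fun x => by
    simpa [Real.norm_eq_abs] using hb x)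
  exact this.congr (Filter.Eventually.of_forall fun x => mul_comm _ _)

lemma int_sq_mul {u w : ℝ → ℝ} {s : Set ℝ} (hw : IntegrableOn w s) (hu : Continuous u)
    {M : ℝ} (hb : ∀ x, |u x| ≤ M) : IntegrableOn (fun x => u x ^ 2 * w x) s :=
  hw.bdd_mul ((hu.pow 2).aestronglyMeasurable.restrict)
    (Filter.Eventually.of_forall fun x => by
      rw [norm_pow, Real.norm_eq_abs]
      exact pow_le_pow_left₀ (abs_nonneg _) (hb x) 2)

/-- Hardy-type inequality on the half line with exponential weight. -/
lemma hardy_Ioi {g g' : ℝ → ℝ} (hg : ∀ x, HasDerivAt g (g' x) x)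
    (hg'c : Continuous g') {M M' : ℝ} (hgb : ∀ x, |g x| ≤ M) (hg'b : ∀ x, |g' x| ≤ M')
    (hg0 : g 0 = 0) :
    ∫ x in Ioi (0:ℝ), g x ^ 2 * Real.exp (-x) ≤
      4 * ∫ x in Ioi (0:ℝ), g' x ^ 2 * Real.exp (-x) := by
  have hgc : Continuous g := by
    rw [continuous_iff_continuousAt]; exact fun x => (hg x).continuousAt
  have hw : IntegrableOn (fun x : ℝ => Real.exp (-x)) (Ioi 0) := by
    have := exp_neg_integrableOn_Ioi 0 one_pos
    simpa using this
  have int1 : IntegrableOn (fun x => g x ^ 2 * Real.exp (-x)) (Ioi 0) :=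
    int_sq_mul hw hgc hgb
  have int2 : IntegrableOn (fun x => g' x ^ 2 * Real.exp (-x)) (Ioi 0) :=
    int_sq_mul hw hg'c hg'b
  have int3 : IntegrableOn (fun x => 2 * g x * g' x * Real.exp (-x)) (Ioi 0) := by
    apply hw.bdd_mul (c := 2 * M * M')
      ((continuous_const.mul hgc |>.mul hg'c).aestronglyMeasurable.restrict)
    apply Filter.Eventually.of_forall
    intro x
    simp only [Pi.mul_apply]
    rw [Real.norm_eq_abs, abs_mul, abs_mul, abs_two]
    have h1 : (0:ℝ) ≤ M := le_trans (abs_nonneg _) (hgb x)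
    calc 2 * |g x| * |g' x| ≤ 2 * M * |g' x| := by
          have := hgb x; nlinarith [abs_nonneg (g' x)]
      _ ≤ 2 * M * M' := by have := hg'b x; nlinarith
  -- FTC on (0, ∞) for h x = -(g x)^2 * exp(-x)
  set h : ℝ → ℝ := fun x => -(g x ^ 2) * Real.exp (-x) with hh
  have hcont : Continuous h := (hgc.pow 2).neg.mul (Real.continuous_exp.comp continuous_neg)
  have hderiv : ∀ x ∈ Ioi (0:ℝ), HasDerivAt h
      (g x ^ 2 * Real.exp (-x) - 2 * g x * g' x * Real.exp (-x)) x := by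
    intro x _
    have h1 : HasDerivAt (fun y => -(g y ^ 2)) (-(2 * g x ^ 1 * g' x)) x := by
      simpa using ((hg x).fun_pow 2).fun_neg
    have h2 : HasDerivAt (fun y : ℝ => Real.exp (-y)) (Real.exp (-x) * -1) x :=
      (hasDerivAt_neg x).exp
    have := h1.fun_mul h2
    exact this.congr_deriv (by ring)
  have htend : Tendsto h atTop (nhds 0) := by
    apply squeeze_zero_norm (a := fun x => M ^ 2 * Real.exp (-x))
    · intro x
      rw [hh]
      simp only [norm_mul, norm_neg, norm_pow, Real.norm_eq_abs,
        abs_of_pos (Real.exp_pos _)]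
      exact mul_le_mul_of_nonneg_right (pow_le_pow_left₀ (abs_nonneg _) (hgb x) 2)
        (Real.exp_pos _).le
    · have := Real.tendsto_exp_neg_atTop_nhds_zero.const_mul (M ^ 2)
      simpa using this
  have key : ∫ x in Ioi (0:ℝ),
      (g x ^ 2 * Real.exp (-x) - 2 * g x * g' x * Real.exp (-x)) = 0 - h 0 :=
    integral_Ioi_of_hasDerivAt_of_tendsto hcont.continuousWithinAt hderiv
      (int1.sub int3) htend
  have h0 : h 0 = 0 := by rw [hh]; simp [hg0]
  rw [integral_sub int1 int3, h0, sub_zero, sub_eq_zero] at key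
  -- pointwise bound
  have int4 : IntegrableOn (fun x => (1/2) * (g x ^ 2 * Real.exp (-x)) +
      2 * (g' x ^ 2 * Real.exp (-x))) (Ioi 0) :=
    (int1.const_mul _).add (int2.const_mul _)
  have hmono : ∫ x in Ioi (0:ℝ), 2 * g x * g' x * Real.exp (-x) ≤
      ∫ x in Ioi (0:ℝ), ((1/2) * (g x ^ 2 * Real.exp (-x)) +
        2 * (g' x ^ 2 * Real.exp (-x))) := by
    apply setIntegral_mono_on int3 int4 measurableSet_Ioi
    intro x _
    have hexp := (Real.exp_pos (-x)).le
    nlinarith [sq_nonneg ((g x - 2 * g' x)), sq_nonneg (g x + 2 * g' x)]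
  rw [integral_add (int1.const_mul _) (int2.const_mul _), integral_const_mul,
    integral_const_mul] at hmono
  linarith [key, hmono]

/-- Hardy-type inequality on the negative half line, by reflection. -/
lemma hardy_Iic {g g' : ℝ → ℝ} (hg : ∀ x, HasDerivAt g (g' x) x)
    (hg'c : Continuous g') {M M' : ℝ} (hgb : ∀ x, |g x| ≤ M) (hg'b : ∀ x, |g' x| ≤ M')
    (hg0 : g 0 = 0) :
    ∫ x in Iic (0:ℝ), g x ^ 2 * Real.exp x ≤
      4 * ∫ x in Iic (0:ℝ), g' x ^ 2 * Real.exp x := by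
  have hrefl : ∀ x : ℝ, HasDerivAt (fun y => g (-y)) (g' (-x) * -1) x := by
    intro x
    exact (hg (-x)).comp x (hasDerivAt_neg x)
  have h1 := hardy_Ioi (g := fun y => g (-y)) (g' := fun y => g' (-y) * -1) hrefl
    ((hg'c.comp continuous_neg).mul continuous_const)
    (M := M) (M' := M') (fun x => hgb (-x))
    (fun x => by rw [abs_mul]; simpa using hg'b (-x)) (by simpa using hg0)
  have e1 : ∫ x in Ioi (0:ℝ), g (-x) ^ 2 * Real.exp (-x) =
      ∫ x in Iic (0:ℝ), g x ^ 2 * Real.exp x := by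
    have := integral_comp_neg_Ioi (0:ℝ) (fun y => g y ^ 2 * Real.exp y)
    simpa using this
  have e2 : ∫ x in Ioi (0:ℝ), (g' (-x) * -1) ^ 2 * Real.exp (-x) =
      ∫ x in Iic (0:ℝ), g' x ^ 2 * Real.exp x := by
    have := integral_comp_neg_Ioi (0:ℝ) (fun y => g' y ^ 2 * Real.exp y)
    simp only [mul_pow, neg_one_sq, mul_one] at h1 ⊢
    simpa using this
  rw [e1, e2] at h1
  exact h1

end PoincareMuVAux

open PoincareMuVAux Real Set Filter in
/-- The probability measure with density proportional to
`exp(−x²/√(1+x²))` satisfies a Poincaré inequality: there is `C_P > 0` such that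
`Var_μ(f) ≤ C_P ∫ (f′)² dμ` for every smooth compactly supported `f`. -/
theorem poincare_inequality_muV :
    ∃ CP : ℝ, 0 < CP ∧
      ∀ f : ℝ → ℝ, ContDiff ℝ (⊤ : ℕ∞) f → HasCompactSupport f →
        (∫ x, f x ^ 2 ∂muV) - (∫ x, f x ∂muV) ^ 2 ≤ CP * ∫ x, deriv f x ^ 2 ∂muV := by
  refine ⟨4 * Real.exp 1, by positivity, ?_⟩
  intro f hf hsupp
  rw [integral_muV, integral_muV, integral_muV]
  -- setup
  obtain ⟨Mf, hMf⟩ := hsupp.exists_bound_of_continuous hf.continuous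
  simp only [Real.norm_eq_abs] at hMf
  set c : ℝ := f 0 with hc
  set g : ℝ → ℝ := fun x => f x - c with hgdef
  have hgc : Continuous g := hf.continuous.sub continuous_const
  have hg : ∀ x, HasDerivAt g (deriv f x) x := fun x =>
    ((hf.differentiable (by simp) x).hasDerivAt).sub_const c
  have hgb : ∀ x, |g x| ≤ Mf + |c| := fun x =>
    (abs_sub _ _).trans (add_le_add_left (hMf x) _)
  have hg0 : g 0 = 0 := by simp [hgdef, hc]
  have hf'c : Continuous (deriv f) := hf.continuous_deriv (by simp)
  obtain ⟨Md, hMd⟩ := (hsupp.deriv).exists_bound_of_continuous hf'c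
  simp only [Real.norm_eq_abs] at hMd
  -- integrability wrt ρ
  have intA : Integrable (fun x => ρ x * f x ^ 2) :=
    integrable_ρ_mul (hf.continuous.pow 2).aestronglyMeasurable
      (M := Mf ^ 2) (fun x => by
        rw [abs_pow]; exact pow_le_pow_left₀ (abs_nonneg _) (hMf x) 2)
  have intB : Integrable (fun x => ρ x * f x) :=
    integrable_ρ_mul hf.continuous.aestronglyMeasurable hMf
  have intG : Integrable (fun x => ρ x * g x ^ 2) :=
    integrable_ρ_mul (hgc.pow 2).aestronglyMeasurable
      (M := (Mf + |c|) ^ 2) (fun x => by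
        rw [abs_pow]; exact pow_le_pow_left₀ (abs_nonneg _) (hgb x) 2)
  -- Step 1 : variance bound
  have e1 : ∫ x, ρ x * g x ^ 2 =
      (∫ x, ρ x * f x ^ 2) - 2 * c * (∫ x, ρ x * f x) + c ^ 2 := by
    have hfun : (fun x => ρ x * g x ^ 2) =
        fun x => (ρ x * f x ^ 2 - 2 * c * (ρ x * f x)) + c ^ 2 * ρ x := by
      funext x; simp only [hgdef]; ring
    have i1 : Integrable (fun x => ρ x * f x ^ 2 - 2 * c * (ρ x * f x)) :=
      intA.sub (intB.const_mul _)
    have i2 : Integrable (fun x => c ^ 2 * ρ x) := integrable_ρ.const_mul _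
    rw [hfun, integral_add i1 i2, integral_sub intA (intB.const_mul _),
      integral_const_mul, integral_const_mul, integral_ρ]
    ring
  have step1 : (∫ x, ρ x * f x ^ 2) - (∫ x, ρ x * f x) ^ 2 ≤ ∫ x, ρ x * g x ^ 2 := by
    rw [e1]
    nlinarith [sq_nonneg ((∫ x, ρ x * f x) - c)]
  -- Step 2 : Hardy inequality
  -- unfold ρ as Z⁻¹ * weight
  have hρ_eq : ∀ u : ℝ → ℝ, (∫ x, ρ x * u x ^ 2) = Z⁻¹ * ∫ x, u x ^ 2 * Real.exp (-V x) := by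
    intro u
    rw [← integral_const_mul]
    congr 1; funext x; simp only [ρ]; ring
  -- half line comparisons
  have weights_plus : ∀ x ∈ Ioi (0:ℝ),
      Real.exp (-V x) ≤ Real.exp 1 * Real.exp (-x) := fun x hx => by
    have := exp_negV_le x
    rwa [abs_of_pos (mem_Ioi.1 hx)] at this
  have weights_plus' : ∀ x ∈ Ioi (0:ℝ), Real.exp (-x) ≤ Real.exp (-V x) := fun x hx => by
    have := exp_neg_abs_le x
    rwa [abs_of_pos (mem_Ioi.1 hx)] at this
  have weights_minus : ∀ x ∈ Iic (0:ℝ),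
      Real.exp (-V x) ≤ Real.exp 1 * Real.exp x := fun x hx => by
    have := exp_negV_le x
    rwa [abs_of_nonpos (mem_Iic.1 hx), neg_neg] at this
  have weights_minus' : ∀ x ∈ Iic (0:ℝ), Real.exp x ≤ Real.exp (-V x) := fun x hx => by
    have := exp_neg_abs_le x
    rwa [abs_of_nonpos (mem_Iic.1 hx), neg_neg] at this
  -- integrability of all half-line integrands
  have hwp : IntegrableOn (fun x : ℝ => Real.exp (-x)) (Ioi 0) := by
    simpa using exp_neg_integrableOn_Ioi 0 one_pos
  have hwm : IntegrableOn (fun x : ℝ => Real.exp x) (Iic 0) := integrableOn_exp_Iic 0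
  have hwV : ∀ s : Set ℝ, IntegrableOn (fun x => Real.exp (-V x)) s := fun s =>
    integrable_exp_negV.integrableOn
  have iGp : IntegrableOn (fun x => g x ^ 2 * Real.exp (-x)) (Ioi 0) := int_sq_mul hwp hgc hgb
  have iGm : IntegrableOn (fun x => g x ^ 2 * Real.exp x) (Iic 0) := int_sq_mul hwm hgc hgb
  have iDp : IntegrableOn (fun x => deriv f x ^ 2 * Real.exp (-x)) (Ioi 0) :=
    int_sq_mul hwp hf'c hMd
  have iDm : IntegrableOn (fun x => deriv f x ^ 2 * Real.exp x) (Iic 0) :=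
    int_sq_mul hwm hf'c hMd
  have iGVp : IntegrableOn (fun x => g x ^ 2 * Real.exp (-V x)) (Ioi 0) :=
    int_sq_mul (hwV _) hgc hgb
  have iGVm : IntegrableOn (fun x => g x ^ 2 * Real.exp (-V x)) (Iic 0) :=
    int_sq_mul (hwV _) hgc hgb
  have iDVp : IntegrableOn (fun x => deriv f x ^ 2 * Real.exp (-V x)) (Ioi 0) :=
    int_sq_mul (hwV _) hf'c hMd
  have iDVm : IntegrableOn (fun x => deriv f x ^ 2 * Real.exp (-V x)) (Iic 0) :=
    int_sq_mul (hwV _) hf'c hMd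
  -- Hardy on each half line
  have hardyP := hardy_Ioi hg hf'c hgb hMd hg0
  have hardyM := hardy_Iic hg hf'c hgb hMd hg0
  -- chain on Ioi
  have chainP : ∫ x in Ioi (0:ℝ), g x ^ 2 * Real.exp (-V x) ≤
      4 * Real.exp 1 * ∫ x in Ioi (0:ℝ), deriv f x ^ 2 * Real.exp (-V x) := by
    have c1 : ∫ x in Ioi (0:ℝ), g x ^ 2 * Real.exp (-V x) ≤
        ∫ x in Ioi (0:ℝ), Real.exp 1 * (g x ^ 2 * Real.exp (-x)) := by
      apply setIntegral_mono_on iGVp (iGp.const_mul _) measurableSet_Ioi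
      intro x hx
      have := weights_plus x hx
      nlinarith [sq_nonneg (g x), Real.exp_pos (-V x)]
    have c2 : ∫ x in Ioi (0:ℝ), deriv f x ^ 2 * Real.exp (-x) ≤
        ∫ x in Ioi (0:ℝ), deriv f x ^ 2 * Real.exp (-V x) := by
      apply setIntegral_mono_on iDp iDVp measurableSet_Ioi
      intro x hx
      have := weights_plus' x hx
      nlinarith [sq_nonneg (deriv f x)]
    rw [integral_const_mul] at c1
    have := Real.exp_pos 1
    nlinarith [hardyP, c2]
  -- chain on Iic
  have chainM : ∫ x in Iic (0:ℝ), g x ^ 2 * Real.exp (-V x) ≤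
      4 * Real.exp 1 * ∫ x in Iic (0:ℝ), deriv f x ^ 2 * Real.exp (-V x) := by
    have c1 : ∫ x in Iic (0:ℝ), g x ^ 2 * Real.exp (-V x) ≤
        ∫ x in Iic (0:ℝ), Real.exp 1 * (g x ^ 2 * Real.exp x) := by
      apply setIntegral_mono_on iGVm (iGm.const_mul _) measurableSet_Iic
      intro x hx
      have := weights_minus x hx
      nlinarith [sq_nonneg (g x), Real.exp_pos (-V x)]
    have c2 : ∫ x in Iic (0:ℝ), deriv f x ^ 2 * Real.exp x ≤
        ∫ x in Iic (0:ℝ), deriv f x ^ 2 * Real.exp (-V x) := by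
      apply setIntegral_mono_on iDm iDVm measurableSet_Iic
      intro x hx
      have := weights_minus' x hx
      nlinarith [sq_nonneg (deriv f x)]
    rw [integral_const_mul] at c1
    have := Real.exp_pos 1
    nlinarith [hardyM, c2]
  -- combine halves
  have splitG : (∫ x, g x ^ 2 * Real.exp (-V x)) =
      (∫ x in Iic (0:ℝ), g x ^ 2 * Real.exp (-V x)) +
        ∫ x in Ioi (0:ℝ), g x ^ 2 * Real.exp (-V x) :=
    (intervalIntegral.integral_Iic_add_Ioi iGVm iGVp).symm
  have splitD : (∫ x, deriv f x ^ 2 * Real.exp (-V x)) =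
      (∫ x in Iic (0:ℝ), deriv f x ^ 2 * Real.exp (-V x)) +
        ∫ x in Ioi (0:ℝ), deriv f x ^ 2 * Real.exp (-V x) :=
    (intervalIntegral.integral_Iic_add_Ioi iDVm iDVp).symm
  have hardy_total : (∫ x, g x ^ 2 * Real.exp (-V x)) ≤
      4 * Real.exp 1 * ∫ x, deriv f x ^ 2 * Real.exp (-V x) := by
    rw [splitG, splitD]
    linarith [chainP, chainM]
  have step2 : (∫ x, ρ x * g x ^ 2) ≤ 4 * Real.exp 1 * ∫ x, ρ x * deriv f x ^ 2 := by
    rw [hρ_eq g, hρ_eq (deriv f)]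
    have hZ : (0:ℝ) ≤ Z⁻¹ := (inv_pos.2 Zpos).le
    calc Z⁻¹ * ∫ x, g x ^ 2 * Real.exp (-V x)
        ≤ Z⁻¹ * (4 * Real.exp 1 * ∫ x, deriv f x ^ 2 * Real.exp (-V x)) :=
          mul_le_mul_of_nonneg_left hardy_total hZ
      _ = 4 * Real.exp 1 * (Z⁻¹ * ∫ x, deriv f x ^ 2 * Real.exp (-V x)) := by ring
  linarith [step1, step2]
end
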